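/- arXiv:0802.2851 — 9 statements merged into one kernel-verified Lean document; each statement's English description precedes it below -/
import Mathlib

section
/- For any three events M1, C1, F1 in a probability space (with complements M2 = M1ᶜ, C2 = C1ᶜ, F2 = F1ᶜ) such that C1 and F1 are independent, and for any real α ≥ 1: P(M1∩C1) + α·P(M2∩C2) + α·P(M1∩F1) + P(M2∩F2) ≤ P(C1) + α·P(F1) + (1+α)·P(C2∩F2). -/
open MeasureTheory

lemma gbm_aux {Ω : Type*} [MeasurableSpace Ω] (μ : Measure Ω)
    (M C F : Set Ω) (hM : MeasurableSet M) (hC : MeasurableSet C) :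
    μ (M ∩ C) + μ (Mᶜ ∩ F) ≤ μ C + μ (Cᶜ ∩ F) := by
  have hsplit : μ ((Mᶜ ∩ F) ∩ C) + μ ((Mᶜ ∩ F) \ C) = μ (Mᶜ ∩ F) :=
    measure_inter_add_diff _ hC
  have h1 : μ (M ∩ C) + μ ((Mᶜ ∩ F) ∩ C) ≤ μ C := by
    have hCsplit : μ (C ∩ M) + μ (C \ M) = μ C := measure_inter_add_diff C hM
    have e1 : μ (M ∩ C) = μ (C ∩ M) := by rw [Set.inter_comm]
    have e2 : μ ((Mᶜ ∩ F) ∩ C) ≤ μ (C \ M) := by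
      apply measure_mono
      rintro x ⟨⟨hxM, -⟩, hxC⟩
      exact ⟨hxC, hxM⟩
    calc μ (M ∩ C) + μ ((Mᶜ ∩ F) ∩ C) ≤ μ (C ∩ M) + μ (C \ M) :=
          add_le_add (le_of_eq e1) e2
      _ = μ C := hCsplit
  have h2 : μ ((Mᶜ ∩ F) \ C) ≤ μ (Cᶜ ∩ F) := by
    apply measure_mono
    rintro x ⟨⟨-, hxF⟩, hxC⟩
    exact ⟨hxC, hxF⟩
  calc μ (M ∩ C) + μ (Mᶜ ∩ F)
      = μ (M ∩ C) + (μ ((Mᶜ ∩ F) ∩ C) + μ ((Mᶜ ∩ F) \ C)) := by rw [hsplit]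
    _ = (μ (M ∩ C) + μ ((Mᶜ ∩ F) ∩ C)) + μ ((Mᶜ ∩ F) \ C) := by ring
    _ ≤ μ C + μ (Cᶜ ∩ F) := add_le_add h1 h2

/-- The key recombination inequality used to bound C_c + C_f in the GBM analysis. -/
theorem gbm_recombination_inequality {Ω : Type*} [MeasurableSpace Ω]
    (μ : Measure Ω) [IsProbabilityMeasure μ]
    (M1 C1 F1 : Set Ω) (hM : MeasurableSet M1) (hC : MeasurableSet C1)
    (hF : MeasurableSet F1)
    (hind : μ (C1 ∩ F1) = μ C1 * μ F1)
    (α : ℝ) (hα : 1 ≤ α) :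
    (μ (M1 ∩ C1)).toReal + α * (μ (M1ᶜ ∩ C1ᶜ)).toReal
      + α * (μ (M1 ∩ F1)).toReal + (μ (M1ᶜ ∩ F1ᶜ)).toReal
    ≤ (μ C1).toReal + α * (μ F1).toReal + (1 + α) * (μ (C1ᶜ ∩ F1ᶜ)).toReal := by
  have hA : μ (M1 ∩ C1) + μ (M1ᶜ ∩ F1ᶜ) ≤ μ C1 + μ (C1ᶜ ∩ F1ᶜ) :=
    gbm_aux μ M1 C1 F1ᶜ hM hC
  have hB : μ (M1 ∩ F1) + μ (M1ᶜ ∩ C1ᶜ) ≤ μ F1 + μ (C1ᶜ ∩ F1ᶜ) := by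
    have := gbm_aux μ M1 F1 C1ᶜ hM hF
    rwa [Set.inter_comm F1ᶜ C1ᶜ] at this
  -- convert to reals
  have ne : ∀ s : Set Ω, μ s ≠ ⊤ := fun s => measure_ne_top μ s
  have hA' : (μ (M1 ∩ C1)).toReal + (μ (M1ᶜ ∩ F1ᶜ)).toReal
      ≤ (μ C1).toReal + (μ (C1ᶜ ∩ F1ᶜ)).toReal := by
    rw [← ENNReal.toReal_add (ne _) (ne _), ← ENNReal.toReal_add (ne _) (ne _)]
    exact ENNReal.toReal_le_toReal (by finiteness) (by finiteness) |>.mpr hA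
  have hB' : (μ (M1 ∩ F1)).toReal + (μ (M1ᶜ ∩ C1ᶜ)).toReal
      ≤ (μ F1).toReal + (μ (C1ᶜ ∩ F1ᶜ)).toReal := by
    rw [← ENNReal.toReal_add (ne _) (ne _), ← ENNReal.toReal_add (ne _) (ne _)]
    exact ENNReal.toReal_le_toReal (by finiteness) (by finiteness) |>.mpr hB
  have hα0 : (0:ℝ) ≤ α := by linarith
  nlinarith [mul_le_mul_of_nonneg_left hB' hα0]
end

section
/- Let 1/2 ≤ r ≤ 1 ≤ α and let C, F be independent Bernoulli random variables with P(C=1)=r and P(F=1)=1−r. Then for any event M, P(M=1,C=1) + α·P(M=2,C=2) + α·P(M=1,F=1) + P(M=2,F=2) ≤ r + α(1−r) + (1+α)r(1−r) = 2r + α − r² − αr². -/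
open MeasureTheory

/-- Bound on C_c + C_f in the GBM analysis. -/
theorem gbm_bound_Cc_Cf {Ω : Type*} [MeasurableSpace Ω]
    (μ : Measure Ω) [IsProbabilityMeasure μ]
    (α r : ℝ) (hr : 1/2 ≤ r) (hr1 : r ≤ 1) (hα : 1 ≤ α)
    (M C F : Set Ω) (hM : MeasurableSet M) (hC : MeasurableSet C)
    (hF : MeasurableSet F)
    (hPC : (μ C).toReal = r) (hPF : (μ F).toReal = 1 - r)
    (hind : μ (C ∩ F) = μ C * μ F) :
    (μ (M ∩ C)).toReal + α * (μ (Mᶜ ∩ Cᶜ)).toReal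
        + α * (μ (M ∩ F)).toReal + (μ (Mᶜ ∩ Fᶜ)).toReal
      ≤ r + α * (1 - r) + (1 + α) * r * (1 - r) ∧
    r + α * (1 - r) + (1 + α) * r * (1 - r) = 2*r + α - r^2 - α * r^2 := by
  have split : ∀ A B : Set Ω, MeasurableSet B →
      (μ A).toReal = (μ (A ∩ B)).toReal + (μ (A ∩ Bᶜ)).toReal := by
    intro A B hB
    rw [← Set.diff_eq, ← ENNReal.toReal_add (measure_ne_top μ _) (measure_ne_top μ _),
      measure_inter_add_diff A hB]
  have meq : ∀ S : Set Ω,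
      (μ S).toReal = (μ (M ∩ S)).toReal + (μ (Mᶜ ∩ S)).toReal := by
    intro S
    have := split S M hM
    rwa [Set.inter_comm S M, Set.inter_comm S Mᶜ] at this
  -- cell measures
  have p11 : (μ (C ∩ F)).toReal = r * (1 - r) := by
    rw [hind, ENNReal.toReal_mul, hPC, hPF]
  have p10 : (μ (C ∩ Fᶜ)).toReal = r - r * (1 - r) := by
    have := split C F hF; rw [hPC, p11] at this; linarith
  have p01 : (μ (Cᶜ ∩ F)).toReal = (1 - r) - r * (1 - r) := by
    have := split F C hC
    rw [hPF, Set.inter_comm F C, p11, Set.inter_comm F Cᶜ] at this; linarith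
  have pCc : (μ Cᶜ).toReal = 1 - r := by
    rw [prob_compl_eq_one_sub hC, ENNReal.toReal_sub_of_le (prob_le_one) (by simp),
      hPC]; simp
  have p00 : (μ (Cᶜ ∩ Fᶜ)).toReal = r * (1 - r) := by
    have := split Cᶜ F hF; rw [pCc, p01] at this; linarith
  -- decompositions of the four LHS sets
  have h1 := split (M ∩ C) F hF
  have h2 := split (Mᶜ ∩ Cᶜ) F hF
  have h3 := split (M ∩ F) C hC
  have h4 := split (Mᶜ ∩ Fᶜ) C hC
  rw [show M ∩ F ∩ C = M ∩ (C ∩ F) by ext x; simp; tauto,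
      show M ∩ F ∩ Cᶜ = M ∩ (Cᶜ ∩ F) by ext x; simp; tauto] at h3
  rw [show Mᶜ ∩ Fᶜ ∩ C = Mᶜ ∩ (C ∩ Fᶜ) by ext x; simp; tauto,
      show Mᶜ ∩ Fᶜ ∩ Cᶜ = Mᶜ ∩ (Cᶜ ∩ Fᶜ) by ext x; simp; tauto] at h4
  rw [show M ∩ C ∩ F = M ∩ (C ∩ F) by rw [Set.inter_assoc],
      show M ∩ C ∩ Fᶜ = M ∩ (C ∩ Fᶜ) by rw [Set.inter_assoc]] at h1
  rw [show Mᶜ ∩ Cᶜ ∩ F = Mᶜ ∩ (Cᶜ ∩ F) by rw [Set.inter_assoc],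
      show Mᶜ ∩ Cᶜ ∩ Fᶜ = Mᶜ ∩ (Cᶜ ∩ Fᶜ) by rw [Set.inter_assoc]] at h2
  -- cell partitions by M
  have c11 := meq (C ∩ F); rw [p11] at c11
  have c10 := meq (C ∩ Fᶜ); rw [p10] at c10
  have c01 := meq (Cᶜ ∩ F); rw [p01] at c01
  have c00 := meq (Cᶜ ∩ Fᶜ); rw [p00] at c00
  have hy1 : 0 ≤ (μ (Mᶜ ∩ (C ∩ F))).toReal := ENNReal.toReal_nonneg
  have hx4 : 0 ≤ (μ (M ∩ (Cᶜ ∩ Fᶜ))).toReal := ENNReal.toReal_nonneg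
  have hα0 : (0:ℝ) ≤ α := by linarith
  constructor
  · nlinarith [mul_nonneg hα0 hy1, mul_nonneg hα0 hx4]
  · ring
end

section
/- Let α > 1 with α ≤ 1 + 1/α, let 1/2 ≤ r ≤ 1, and let C be a Bernoulli random variable with P(C=1)=r. Then for any event M (with complement M=2): P(M=1,C=1) + α·P(M=2,C=2) + P(M=1)/α ≤ 1 + 1/α. -/
open MeasureTheory

/-! With `a = P(M ∩ C)`, `b = P(Mᶜ ∩ Cᶜ)`, `m = P(M)` and `t = min m r`, we have `a ≤ t` and
`b ≤ 1 - m`. Since `α ≥ 1/α`, the expression `a + α b + m/α` is at most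
`t + α (1 - t) + t/α`, whose excess over `1 + 1/α` is `(1 - t)(α - 1 - 1/α) ≤ 0`. -/

section GoldenBound

variable {α : ℝ}

theorem add_mul_one_sub_add_div_le_one_add_inv_of_le_golden (hαg : α ≤ 1 + 1/α) {t : ℝ}
    (ht : t ≤ 1) : t + α * (1 - t) + t / α ≤ 1 + 1/α := by
  have key : t + α * (1 - t) + t / α - (1 + 1/α) = (1 - t) * (α - (1 + 1/α)) := by ring
  linarith [mul_nonpos_of_nonneg_of_nonpos (sub_nonneg.2 ht) (sub_nonpos.2 hαg)]

theorem add_mul_add_div_le_of_le_of_le (hα : 1 ≤ α) {a b m t : ℝ} (hat : a ≤ t) (htm : t ≤ m)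
    (hbm : b ≤ 1 - m) : a + α * b + m / α ≤ t + α * (1 - t) + t / α := by
  have hα0 : 0 < α := zero_lt_one.trans_le hα
  have hinv : 1 / α ≤ α := (div_le_one hα0 |>.2 hα).trans hα
  have hαb : α * b ≤ α * (1 - m) := mul_le_mul_of_nonneg_left hbm hα0.le
  have hshift : α * (1 - m) + m / α ≤ α * (1 - t) + t / α := by
    have : α * (1 - m) + m / α = α * (1 - t) + t / α - (m - t) * (α - 1 / α) := by ring
    linarith [mul_nonneg (sub_nonneg.2 htm) (sub_nonneg.2 hinv)]
  linarith

end GoldenBound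

theorem gbm_bound_Cc_Cb_general {Ω : Type*} [MeasurableSpace Ω]
    (μ : Measure Ω) [IsProbabilityMeasure μ]
    (α r : ℝ) (hα1 : 1 < α) (hαg : α ≤ 1 + 1/α) (hr1 : r ≤ 1)
    (M C : Set Ω) (hM : MeasurableSet M)
    (hPC : (μ C).toReal = r) :
    (μ (M ∩ C)).toReal + α * (μ (Mᶜ ∩ Cᶜ)).toReal + (μ M).toReal / α
      ≤ 1 + 1/α := by
  simp only [← measureReal_def] at hPC ⊢
  have haM : μ.real (M ∩ C) ≤ μ.real M := measureReal_mono Set.inter_subset_left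
  have haC : μ.real (M ∩ C) ≤ r := hPC ▸ measureReal_mono Set.inter_subset_right
  have hbM : μ.real (Mᶜ ∩ Cᶜ) ≤ 1 - μ.real M :=
    probReal_compl_eq_one_sub (μ := μ) hM ▸ measureReal_mono Set.inter_subset_left
  calc _ ≤ min (μ.real M) r + α * (1 - min (μ.real M) r) + min (μ.real M) r / α :=
        add_mul_add_div_le_of_le_of_le hα1.le (le_min haM haC) (min_le_left _ _) hbM
    _ ≤ 1 + 1/α :=
        add_mul_one_sub_add_div_le_one_add_inv_of_le_golden hαg ((min_le_right _ _).trans hr1)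

/-- Bound C_c + C_b/α ≤ 1 + 1/α in the GBM analysis. -/
theorem gbm_bound_Cc_Cb {Ω : Type*} [MeasurableSpace Ω]
    (μ : Measure Ω) [IsProbabilityMeasure μ]
    (α r : ℝ) (hα1 : 1 < α) (hαg : α ≤ 1 + 1/α) (hr : 1/2 ≤ r) (hr1 : r ≤ 1)
    (M C : Set Ω) (hM : MeasurableSet M) (hC : MeasurableSet C)
    (hPC : (μ C).toReal = r) :
    (μ (M ∩ C)).toReal + α * (μ (Mᶜ ∩ Cᶜ)).toReal + (μ M).toReal / α
      ≤ 1 + 1/α :=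
  gbm_bound_Cc_Cb_general μ α r hα1 hαg hr1 M C hM hPC
end

section
/- Let α ≥ β ≥ 1 and 1/2 ≤ r ≤ 1. Let C, H be independent Bernoulli variables with P(C=1)=r and P(H=1)=1/2. For any event M: P(M=1,C=1) + α·P(M=2,C=2) + β·P(M=1,H=1) + P(M=2,H=2) ≤ 1/2 + r/2 + α − αr + βr/2. -/
open MeasureTheory

lemma gbm_aux_pair {Ω : Type*} [MeasurableSpace Ω]
    (μ : Measure Ω) [IsProbabilityMeasure μ] {A B S : Set Ω}
    (hB : MeasurableSet B) (hd : Disjoint A B) (hsub : A ∪ B ⊆ S) :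
    (μ A).toReal + (μ B).toReal ≤ (μ S).toReal := by
  have h1 : μ A + μ B = μ (A ∪ B) := (measure_union hd hB).symm
  have h2 : μ (A ∪ B) ≤ μ S := measure_mono hsub
  calc (μ A).toReal + (μ B).toReal
      = (μ A + μ B).toReal := (ENNReal.toReal_add (measure_ne_top _ _) (measure_ne_top _ _)).symm
    _ ≤ (μ S).toReal := by
        rw [h1]
        exact ENNReal.toReal_mono (measure_ne_top _ _) h2

/-- Bound C_c + C_h in the GBM analysis. -/
theorem gbm_bound_Cc_Ch {Ω : Type*} [MeasurableSpace Ω]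
    (μ : Measure Ω) [IsProbabilityMeasure μ]
    (α β r : ℝ) (hαβ : β ≤ α) (hβ : 1 ≤ β) (hr : 1/2 ≤ r) (hr1 : r ≤ 1)
    (M C H : Set Ω) (hM : MeasurableSet M) (hC : MeasurableSet C)
    (hH : MeasurableSet H)
    (hPC : (μ C).toReal = r) (hPH : (μ H).toReal = 1/2)
    (hind : μ (C ∩ H) = μ C * μ H) :
    (μ (M ∩ C)).toReal + α * (μ (Mᶜ ∩ Cᶜ)).toReal
        + β * (μ (M ∩ H)).toReal + (μ (Mᶜ ∩ Hᶜ)).toReal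
      ≤ 1/2 + r/2 + α - α * r + β * r / 2 := by
  -- value of μ (C ∩ H)
  have hCH : (μ (C ∩ H)).toReal = r * (1/2) := by
    rw [hind, ENNReal.toReal_mul, hPC, hPH]
  -- split H by C : μ (C ∩ H) + μ (Cᶜ ∩ H) = μ H
  have hsplitH : (μ (C ∩ H)).toReal + (μ (Cᶜ ∩ H)).toReal = (μ H).toReal := by
    have := measure_inter_add_diff (μ := μ) H hC
    have hd : H \ C = Cᶜ ∩ H := by ext x; simp [Set.mem_diff, and_comm]
    rw [hd, Set.inter_comm H C] at this
    rw [← ENNReal.toReal_add (measure_ne_top _ _) (measure_ne_top _ _), this]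
  -- split C by H : μ (C ∩ H) + μ (C ∩ Hᶜ) = μ C
  have hsplitC : (μ (C ∩ H)).toReal + (μ (C ∩ Hᶜ)).toReal = (μ C).toReal := by
    have := measure_inter_add_diff (μ := μ) C hH
    have hd : C \ H = C ∩ Hᶜ := rfl
    rw [hd] at this
    rw [← ENNReal.toReal_add (measure_ne_top _ _) (measure_ne_top _ _), this]
  -- complements
  have hcompl : ∀ (s : Set Ω), MeasurableSet s →
      (μ sᶜ).toReal = 1 - (μ s).toReal := by
    intro s hs
    have h := measure_add_measure_compl (μ := μ) hs
    have : (μ s).toReal + (μ sᶜ).toReal = 1 := by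
      rw [← ENNReal.toReal_add (measure_ne_top _ _) (measure_ne_top _ _), h]
      simp
    linarith
  -- key inequality 1 : a + d ≤ μ (C ∪ Hᶜ)
  have key1 : (μ (M ∩ C)).toReal + (μ (Mᶜ ∩ Hᶜ)).toReal
      ≤ (μ (Cᶜ ∩ H)ᶜ).toReal := by
    apply gbm_aux_pair μ ((hM.compl).inter hH.compl)
    · exact Set.disjoint_left.2 (by rintro x ⟨hx, -⟩ ⟨hx', -⟩; exact hx' hx)
    · rw [Set.compl_inter, compl_compl]
      rintro x (⟨-, hx⟩ | ⟨-, hx⟩)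
      · exact Or.inl hx
      · exact Or.inr hx
  -- key inequality 2 : b + c ≤ μ (Cᶜ ∪ H)
  have key2 : (μ (Mᶜ ∩ Cᶜ)).toReal + (μ (M ∩ H)).toReal
      ≤ (μ (C ∩ Hᶜ)ᶜ).toReal := by
    apply gbm_aux_pair μ (hM.inter hH)
    · exact Set.disjoint_left.2 (by rintro x ⟨hx, -⟩ ⟨hx', -⟩; exact hx hx')
    · rw [Set.compl_inter, compl_compl]
      rintro x (⟨-, hx⟩ | ⟨-, hx⟩)
      · exact Or.inl hx
      · exact Or.inr hx
  -- key inequality 3 : b ≤ 1 - r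
  have key3 : (μ (Mᶜ ∩ Cᶜ)).toReal ≤ 1 - r := by
    have h1 : (μ (Mᶜ ∩ Cᶜ)).toReal ≤ (μ Cᶜ).toReal :=
      ENNReal.toReal_mono (measure_ne_top _ _) (measure_mono Set.inter_subset_right)
    have h2 : (μ Cᶜ).toReal = 1 - r := by rw [hcompl C hC, hPC]
    linarith
  -- rewrite the complements in key1, key2
  rw [hcompl _ (hC.compl.inter hH)] at key1
  rw [hcompl _ (hC.inter hH.compl)] at key2
  have e1 : (μ (Cᶜ ∩ H)).toReal = 1/2 - r/2 := by
    rw [hPH] at hsplitH; rw [hCH] at hsplitH; linarith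
  have e2 : (μ (C ∩ Hᶜ)).toReal = r - r/2 := by
    rw [hPC] at hsplitC; rw [hCH] at hsplitC; linarith
  rw [e1] at key1
  rw [e2] at key2
  have hc0 : 0 ≤ (μ (M ∩ H)).toReal := ENNReal.toReal_nonneg
  have hb0 : 0 ≤ (μ (Mᶜ ∩ Cᶜ)).toReal := ENNReal.toReal_nonneg
  nlinarith [mul_nonneg (sub_nonneg.2 hαβ) (sub_nonneg.2 key3),
    mul_nonneg (by linarith : (0:ℝ) ≤ β)
      (by linarith [key2] : (0:ℝ) ≤ 1 - (r - r/2) - (μ (Mᶜ ∩ Cᶜ)).toReal - (μ (M ∩ H)).toReal)]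
end

section
/- Let β ≥ 1 and 1/2 ≤ r ≤ 1. Let E, H be independent Bernoulli variables with P(E=1)=1−r and P(H=1)=1/2. For any event M: (β·P(M=1,E=1) + P(M=2,E=2))/β + β·P(M=1,H=1) + P(M=2,H=2) ≤ 1 + r/(2β) + β/2 − r/2. -/
/-!
Write `m = P(M)`, `a = P(M ∩ E)`, `c = P(M ∩ H)`. By inclusion–exclusion the complementary terms are
`P(Mᶜ ∩ Eᶜ) = r - m + a` and `P(Mᶜ ∩ Hᶜ) = 1/2 - m + c`, so `β` times the left-hand side equals
`(β + 1)(a + c - m) + (β² - 1) c + r + β/2`. Now `a + c - m ≤ P(E ∩ H)`, which is `(1 - r)/2` by independence,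
and `c ≤ P(H) = 1/2`; since `β ≥ 1` both coefficients are nonnegative, and the two bounds add up
to exactly `β` times the right-hand side.
-/

open MeasureTheory

namespace MeasureTheory

variable {Ω : Type*} [MeasurableSpace Ω]

theorem probReal_compl_inter_compl (μ : Measure Ω) [IsProbabilityMeasure μ] {s t : Set Ω}
    (hs : MeasurableSet s) (ht : MeasurableSet t) :
    μ.real (sᶜ ∩ tᶜ) = 1 - μ.real s - μ.real t + μ.real (s ∩ t) := by
  rw [← Set.compl_union, probReal_compl_eq_one_sub (hs.union ht)]
  linarith [measureReal_union_add_inter (μ := μ) (s := s) ht]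

theorem measureReal_inter_add_inter_le (μ : Measure Ω) [IsFiniteMeasure μ] (s : Set Ω)
    {t u : Set Ω} (hu : MeasurableSet u) :
    μ.real (s ∩ t) + μ.real (s ∩ u) ≤ μ.real s + μ.real (t ∩ u) := by
  have split_st := measureReal_inter_add_sdiff (μ := μ) (s := s ∩ t) hu
  have split_s := measureReal_inter_add_sdiff (μ := μ) (s := s) hu
  have hstu : μ.real (s ∩ t ∩ u) ≤ μ.real (t ∩ u) :=
    measureReal_mono fun x hx ↦ ⟨hx.1.2, hx.2⟩
  have hstu' : μ.real ((s ∩ t) \ u) ≤ μ.real (s \ u) :=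
    measureReal_mono fun x hx ↦ ⟨hx.1.1, hx.2⟩
  linarith

end MeasureTheory

theorem gbm_bound_Ce_Ch_general {Ω : Type*} [MeasurableSpace Ω]
    (μ : Measure Ω) [IsProbabilityMeasure μ]
    (β r : ℝ) (hβ : 1 ≤ β)
    (M E H : Set Ω) (hM : MeasurableSet M) (hE : MeasurableSet E)
    (hH : MeasurableSet H)
    (hPE : (μ E).toReal = 1 - r) (hPH : (μ H).toReal = 1/2)
    (hind : μ (E ∩ H) = μ E * μ H) :
    (β * (μ (M ∩ E)).toReal + (μ (Mᶜ ∩ Eᶜ)).toReal) / β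
        + β * (μ (M ∩ H)).toReal + (μ (Mᶜ ∩ Hᶜ)).toReal
      ≤ 1 + r / (2 * β) + β / 2 - r / 2 := by
  simp only [← measureReal_def] at hPE hPH ⊢
  have hEH_indep : μ.real (E ∩ H) = (1 - r) / 2 := by
    rw [measureReal_def, hind, ENNReal.toReal_mul, ← measureReal_def, ← measureReal_def, hPE, hPH]
    ring
  have hMEH : μ.real (M ∩ E) + μ.real (M ∩ H) ≤ μ.real M + (1 - r) / 2 :=
    hEH_indep ▸ measureReal_inter_add_inter_le μ M hH
  have hHc : μ.real (M ∩ H) ≤ 1 / 2 := hPH ▸ measureReal_mono Set.inter_subset_right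
  rw [probReal_compl_inter_compl μ hM hE, probReal_compl_inter_compl μ hM hH, hPE, hPH]
  refine le_of_mul_le_mul_left ?_ (by linarith : 0 < β)
  field_simp
  linarith [mul_le_mul_of_nonneg_left hMEH (by linarith : (0:ℝ) ≤ β + 1),
    mul_le_mul_of_nonneg_left hHc (by nlinarith : (0:ℝ) ≤ β ^ 2 - 1)]

/-- Bound C_e/β + C_h in the GBM analysis. -/
theorem gbm_bound_Ce_Ch {Ω : Type*} [MeasurableSpace Ω]
    (μ : Measure Ω) [IsProbabilityMeasure μ]
    (β r : ℝ) (hβ : 1 ≤ β) (hr : 1/2 ≤ r) (hr1 : r ≤ 1)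
    (M E H : Set Ω) (hM : MeasurableSet M) (hE : MeasurableSet E)
    (hH : MeasurableSet H)
    (hPE : (μ E).toReal = 1 - r) (hPH : (μ H).toReal = 1/2)
    (hind : μ (E ∩ H) = μ E * μ H) :
    (β * (μ (M ∩ E)).toReal + (μ (Mᶜ ∩ Eᶜ)).toReal) / β
        + β * (μ (M ∩ H)).toReal + (μ (Mᶜ ∩ Hᶜ)).toReal
      ≤ 1 + r / (2 * β) + β / 2 - r / 2 :=
  gbm_bound_Ce_Ch_general μ β r hβ M E H hM hE hH hPE hPH hind
end

section
/- Let β ≥ 1 and let G, H be independent Bernoulli variables each taking value 1 with probability 1/2. For any event M: P(M=1,G=1) + β·P(M=2,G=2) + β·P(M=1,H=1) + P(M=2,H=2) ≤ 3/4 + 3β/4. -/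
open MeasureTheory

/-- Bound C_g + C_h ≤ 3/4 + 3β/4 in the GBM analysis. -/
theorem gbm_bound_Cg_Ch {Ω : Type*} [MeasurableSpace Ω]
    (μ : Measure Ω) [IsProbabilityMeasure μ]
    (β : ℝ) (hβ : 1 ≤ β)
    (M G H : Set Ω) (hM : MeasurableSet M) (hG : MeasurableSet G)
    (hH : MeasurableSet H)
    (hPG : (μ G).toReal = 1/2) (hPH : (μ H).toReal = 1/2)
    (hind : μ (G ∩ H) = μ G * μ H) :
    (μ (M ∩ G)).toReal + β * (μ (Mᶜ ∩ Gᶜ)).toReal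
        + β * (μ (M ∩ H)).toReal + (μ (Mᶜ ∩ Hᶜ)).toReal
      ≤ 3/4 + 3 * β / 4 := by
  have hβ0 : (0:ℝ) ≤ β := le_trans zero_le_one hβ
  -- generic splitting lemma
  have hsplit : ∀ A B : Set Ω, MeasurableSet B →
      (μ A).toReal = (μ (A ∩ B)).toReal + (μ (A ∩ Bᶜ)).toReal := by
    intro A B hB
    rw [← ENNReal.toReal_add (measure_ne_top _ _) (measure_ne_top _ _), ← Set.diff_eq,
      measure_inter_add_diff A hB]
  -- atoms
  set x1 := (μ (M ∩ (G ∩ H))).toReal with hx1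
  set x2 := (μ (M ∩ (G ∩ Hᶜ))).toReal with hx2
  set x3 := (μ (M ∩ (Gᶜ ∩ H))).toReal with hx3
  set x4 := (μ (M ∩ (Gᶜ ∩ Hᶜ))).toReal with hx4
  set y1 := (μ (Mᶜ ∩ (G ∩ H))).toReal with hy1
  set y2 := (μ (Mᶜ ∩ (G ∩ Hᶜ))).toReal with hy2
  set y3 := (μ (Mᶜ ∩ (Gᶜ ∩ H))).toReal with hy3
  set y4 := (μ (Mᶜ ∩ (Gᶜ ∩ Hᶜ))).toReal with hy4
  -- cell measures are each 1/4
  have hGH : (μ (G ∩ H)).toReal = 1/4 := by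
    rw [hind, ENNReal.toReal_mul, hPG, hPH]; norm_num
  have hGsplit : (μ G).toReal = (μ (G ∩ H)).toReal + (μ (G ∩ Hᶜ)).toReal := hsplit G H hH
  have hGH' : (μ (G ∩ Hᶜ)).toReal = 1/4 := by
    rw [hPG, hGH] at hGsplit; linarith
  have hHsplit : (μ H).toReal = (μ (H ∩ G)).toReal + (μ (H ∩ Gᶜ)).toReal := hsplit H G hG
  have hGcH : (μ (Gᶜ ∩ H)).toReal = 1/4 := by
    rw [hPH, Set.inter_comm H G, hGH, Set.inter_comm H Gᶜ] at hHsplit; linarith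
  have huniv : (μ (Set.univ : Set Ω)).toReal = 1 := by simp
  have hGc : (μ (Gᶜ : Set Ω)).toReal = 1/2 := by
    have := hsplit Set.univ G hG
    rw [huniv, Set.univ_inter, Set.univ_inter, hPG] at this; linarith
  have hGcHc : (μ (Gᶜ ∩ Hᶜ)).toReal = 1/4 := by
    have := hsplit Gᶜ H hH
    rw [hGc, hGcH] at this; linarith
  -- split each cell by M
  have cell : ∀ S : Set Ω, (μ S).toReal = (μ (M ∩ S)).toReal + (μ (Mᶜ ∩ S)).toReal := by
    intro S
    have := hsplit S M hM
    rw [Set.inter_comm S M, Set.inter_comm S Mᶜ] at this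
    exact this
  have h1 : x1 + y1 = 1/4 := by rw [← hGH]; exact (cell (G ∩ H)).symm
  have h2 : x2 + y2 = 1/4 := by rw [← hGH']; exact (cell (G ∩ Hᶜ)).symm
  have h3 : x3 + y3 = 1/4 := by rw [← hGcH]; exact (cell (Gᶜ ∩ H)).symm
  have h4 : x4 + y4 = 1/4 := by rw [← hGcHc]; exact (cell (Gᶜ ∩ Hᶜ)).symm
  -- split the four quantities in the goal into atoms
  have hA : (μ (M ∩ G)).toReal = x1 + x2 := by
    have := hsplit (M ∩ G) H hH
    rw [Set.inter_assoc, Set.inter_assoc] at this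
    exact this
  have hB : (μ (Mᶜ ∩ Gᶜ)).toReal = y3 + y4 := by
    have := hsplit (Mᶜ ∩ Gᶜ) H hH
    rw [Set.inter_assoc, Set.inter_assoc] at this
    exact this
  have hC : (μ (M ∩ H)).toReal = x1 + x3 := by
    have := hsplit (M ∩ H) G hG
    have e1 : (M ∩ H) ∩ G = M ∩ (G ∩ H) := by ext ω; simp; tauto
    have e2 : (M ∩ H) ∩ Gᶜ = M ∩ (Gᶜ ∩ H) := by ext ω; simp; tauto
    rw [e1, e2] at this
    exact this
  have hD : (μ (Mᶜ ∩ Hᶜ)).toReal = y2 + y4 := by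
    have := hsplit (Mᶜ ∩ Hᶜ) G hG
    have e1 : (Mᶜ ∩ Hᶜ) ∩ G = Mᶜ ∩ (G ∩ Hᶜ) := by ext ω; simp; tauto
    have e2 : (Mᶜ ∩ Hᶜ) ∩ Gᶜ = Mᶜ ∩ (Gᶜ ∩ Hᶜ) := by ext ω; simp; tauto
    rw [e1, e2] at this
    exact this
  -- multiply β through
  have hB' : β * (μ (Mᶜ ∩ Gᶜ)).toReal = β * y3 + β * y4 := by rw [hB]; ring
  have hC' : β * (μ (M ∩ H)).toReal = β * x1 + β * x3 := by rw [hC]; ring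
  have hm1 : β * x1 + β * y1 = β * (1/4) := by rw [← mul_add, h1]
  have hm3 : β * x3 + β * y3 = β * (1/4) := by rw [← mul_add, h3]
  have hm4 : β * x4 + β * y4 = β * (1/4) := by rw [← mul_add, h4]
  have hy1n : 0 ≤ y1 := ENNReal.toReal_nonneg
  have hx4n : 0 ≤ x4 := ENNReal.toReal_nonneg
  have hby1 : 0 ≤ β * y1 := mul_nonneg hβ0 hy1n
  have hbx4 : 0 ≤ β * x4 := mul_nonneg hβ0 hx4n
  rw [hA, hB', hC', hD]
  linarith
end

section
/- Let 0 ≤ p ≤ 1 and let T¹, T², t¹₁, t¹₂, t²₁, t²₂ be nonnegative reals with T² ≤ T¹ + t¹₁ + t¹₂ (where superscripts denote machines and subscripts the two tasks j₁, j₂). Suppose machine 1 finishes last iff both tasks go to it. Then p²(T¹ + t¹₁ + t¹₂) + p(1−p)(T² + t²₁) + p(1−p)(T² + t²₂) + (1−p)²(T² + t²₁ + t²₂) ≤ p(T¹ + t¹₁ + t¹₂) + (1−p)(T² + t²₁ + t²₂). -/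
/-- Task-combining inequality (Claim 3.6(6)), case where machine 1 finishes
last iff both tasks are allocated to it. -/
theorem gbm_combining_both_tasks_case
    (p T1 T2 t11 t12 t21 t22 : ℝ)
    (hp0 : 0 ≤ p) (hp1 : p ≤ 1)
    (hT1 : 0 ≤ T1) (hT2 : 0 ≤ T2)
    (ht11 : 0 ≤ t11) (ht12 : 0 ≤ t12) (ht21 : 0 ≤ t21) (ht22 : 0 ≤ t22)
    (hlast : T2 ≤ T1 + t11 + t12) :
    p^2 * (T1 + t11 + t12) + p*(1-p) * (T2 + t21) + p*(1-p) * (T2 + t22)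
        + (1-p)^2 * (T2 + t21 + t22)
      ≤ p * (T1 + t11 + t12) + (1-p) * (T2 + t21 + t22) := by
  nlinarith [mul_nonneg (mul_nonneg hp0 (sub_nonneg.2 hp1)) (sub_nonneg.2 hlast)]
end

section
/- Let 0 ≤ p ≤ 1 and nonnegative reals T¹, T², t¹₁ ≥ t¹₂, t²₁ ≥ t²₂ such that the machine receiving task j₁ always finishes last, i.e., T¹ + t¹₁ ≥ T² + t²₂ and T² + t²₁ ≥ T¹ + t¹₂. Then p²(T¹ + t¹₁ + t¹₂) + p(1−p)(T¹ + t¹₁) + p(1−p)(T² + t²₁) + (1−p)²(T² + t²₁ + t²₂) ≤ p(T¹ + t¹₁ + t¹₂) + (1−p)(T² + t²₁ + t²₂). -/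
/-- Task-combining inequality (Claim 3.6(6)), case where the machine receiving
task j₁ always finishes last. -/
theorem gbm_combining_first_task_case
    (p T1 T2 t11 t12 t21 t22 : ℝ)
    (hp0 : 0 ≤ p) (hp1 : p ≤ 1)
    (hT1 : 0 ≤ T1) (hT2 : 0 ≤ T2)
    (ht11 : 0 ≤ t11) (ht12 : 0 ≤ t12) (ht21 : 0 ≤ t21) (ht22 : 0 ≤ t22)
    (h1 : t12 ≤ t11) (h2 : t22 ≤ t21)
    (hlast1 : T2 + t22 ≤ T1 + t11) (hlast2 : T1 + t12 ≤ T2 + t21) :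
    p^2 * (T1 + t11 + t12) + p*(1-p) * (T1 + t11) + p*(1-p) * (T2 + t21)
        + (1-p)^2 * (T2 + t21 + t22)
      ≤ p * (T1 + t11 + t12) + (1-p) * (T2 + t21 + t22) := by
  nlinarith [mul_nonneg (mul_nonneg hp0 (sub_nonneg.2 hp1)) (add_nonneg ht12 ht22)]
end

section
/- Let β ≥ 1 and 1/2 ≤ r ≤ 1. Let E, D be independent Bernoulli variables with P(E=1)=1−r and P(D=1)=r. For any event M: (β·P(M=1,E=1) + P(M=2,E=2))/β + (P(M=1,D=1) + β·P(M=2,D=2))/β ≤ (1−r) + r/β + (1 + 1/β)·r(1−r). -/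
/-!
The events `M ∩ E`, `Mᶜ ∩ Dᶜ` and `Eᶜ ∩ D` are pairwise disjoint, so
`P(M, E) + P(Mᶜ, Dᶜ) ≤ 1 - P(Eᶜ ∩ D) = 1 - r²` by independence; symmetrically
`P(M, D) + P(Mᶜ, Eᶜ) ≤ 1 - P(E ∩ Dᶜ) = 1 - (1 - r)²`. The left-hand side is the first sum
plus the second divided by `β`, and `1 - r² = (1 - r) + r (1 - r)`,
`1 - (1 - r)² = r + r (1 - r)`.
-/

open MeasureTheory ProbabilityTheory

namespace ProbabilityTheory

variable {Ω : Type*} {mΩ : MeasurableSpace Ω} {μ : Measure Ω} {s t : Set Ω}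

theorem IndepSet.compl_left (h : IndepSet s t μ) : IndepSet sᶜ t μ :=
  ((IndepSet_iff_Indep s t μ).1 h).indepSet_of_measurableSet
    (MeasurableSpace.measurableSet_generateFrom (Set.mem_singleton s)).compl
    (MeasurableSpace.measurableSet_generateFrom (Set.mem_singleton t))

theorem IndepSet.compl_right (h : IndepSet s t μ) : IndepSet s tᶜ μ :=
  ((IndepSet_iff_Indep s t μ).1 h).indepSet_of_measurableSet
    (MeasurableSpace.measurableSet_generateFrom (Set.mem_singleton s))
    (MeasurableSpace.measurableSet_generateFrom (Set.mem_singleton t)).compl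

theorem IndepSet.measureReal_inter_eq_mul (h : IndepSet s t μ) :
    μ.real (s ∩ t) = μ.real s * μ.real t := by
  simp only [measureReal_def, h.measure_inter_eq_mul, ENNReal.toReal_mul]

end ProbabilityTheory

namespace MeasureTheory

variable {Ω : Type*} {mΩ : MeasurableSpace Ω} (μ : Measure Ω) {M A B : Set Ω}

theorem measureReal_inter_add_compl_inter_le [IsFiniteMeasure μ] (hM : MeasurableSet M) :
    μ.real (M ∩ A) + μ.real (Mᶜ ∩ B) ≤ μ.real (A ∪ B) := by
  set S := M ∩ A ∪ Mᶜ ∩ B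
  have hSM : S ∩ M = M ∩ A := by ext; simp [S]; tauto
  have hSdiff : S \ M = Mᶜ ∩ B := by ext; simp [S]; tauto
  calc μ.real (M ∩ A) + μ.real (Mᶜ ∩ B) = μ.real S := by
        rw [← hSM, ← hSdiff, measureReal_inter_add_sdiff hM]
    _ ≤ μ.real (A ∪ B) :=
        measureReal_mono (Set.union_subset_union Set.inter_subset_right Set.inter_subset_right)

theorem measureReal_inter_add_compl_inter_le_one_sub [IsProbabilityMeasure μ]
    (hM : MeasurableSet M) (hA : MeasurableSet A) (hB : MeasurableSet B) :
    μ.real (M ∩ A) + μ.real (Mᶜ ∩ B) ≤ 1 - μ.real (Aᶜ ∩ Bᶜ) := by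
  rw [← Set.compl_union, probReal_compl_eq_one_sub (hA.union hB), sub_sub_cancel]
  exact measureReal_inter_add_compl_inter_le μ hM

end MeasureTheory

theorem gbm_bound_Ce_Cd_general {Ω : Type*} [MeasurableSpace Ω]
    (μ : Measure Ω) [IsProbabilityMeasure μ]
    (β r : ℝ) (hβ : 1 ≤ β)
    (M E D : Set Ω) (hM : MeasurableSet M) (hE : MeasurableSet E)
    (hD : MeasurableSet D)
    (hPE : (μ E).toReal = 1 - r) (hPD : (μ D).toReal = r)
    (hind : μ (E ∩ D) = μ E * μ D) :
    (β * (μ (M ∩ E)).toReal + (μ (Mᶜ ∩ Eᶜ)).toReal) / β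
        + ((μ (M ∩ D)).toReal + β * (μ (Mᶜ ∩ Dᶜ)).toReal) / β
      ≤ (1 - r) + r / β + (1 + 1/β) * (r * (1 - r)) := by
  have hI : IndepSet E D μ := (indepSet_iff_measure_inter_eq_mul hE hD μ).2 hind
  have hEcD : μ.real (Eᶜ ∩ D) = r * r := by
    rw [hI.compl_left.measureReal_inter_eq_mul, probReal_compl_eq_one_sub hE, measureReal_def,
      measureReal_def, hPE, hPD]
    ring
  have hDcE : μ.real (Dᶜ ∩ E) = (1 - r) * (1 - r) := by
    rw [Set.inter_comm, hI.compl_right.measureReal_inter_eq_mul, probReal_compl_eq_one_sub hD,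
      measureReal_def, measureReal_def, hPE, hPD]
  have hMEDc : μ.real (M ∩ E) + μ.real (Mᶜ ∩ Dᶜ) ≤ 1 - r * r := by
    simpa [hEcD] using measureReal_inter_add_compl_inter_le_one_sub μ hM hE hD.compl
  have hMDEc : μ.real (M ∩ D) + μ.real (Mᶜ ∩ Eᶜ) ≤ 1 - (1 - r) * (1 - r) := by
    simpa [hDcE] using measureReal_inter_add_compl_inter_le_one_sub μ hM hD hE.compl
  have hβ0 : 0 < β := one_pos.trans_le hβ
  calc (β * μ.real (M ∩ E) + μ.real (Mᶜ ∩ Eᶜ)) / β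
        + (μ.real (M ∩ D) + β * μ.real (Mᶜ ∩ Dᶜ)) / β
      = (μ.real (M ∩ E) + μ.real (Mᶜ ∩ Dᶜ))
          + (μ.real (M ∩ D) + μ.real (Mᶜ ∩ Eᶜ)) / β := by field_simp; ring
    _ ≤ (1 - r * r) + (1 - (1 - r) * (1 - r)) / β := by gcongr
    _ = (1 - r) + r / β + (1 + 1/β) * (r * (1 - r)) := by field_simp; ring

/-- Bound C_e/β + C_d/β in the GBM analysis. -/
theorem gbm_bound_Ce_Cd {Ω : Type*} [MeasurableSpace Ω]
    (μ : Measure Ω) [IsProbabilityMeasure μ]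
    (β r : ℝ) (hβ : 1 ≤ β) (hr : 1/2 ≤ r) (hr1 : r ≤ 1)
    (M E D : Set Ω) (hM : MeasurableSet M) (hE : MeasurableSet E)
    (hD : MeasurableSet D)
    (hPE : (μ E).toReal = 1 - r) (hPD : (μ D).toReal = r)
    (hind : μ (E ∩ D) = μ E * μ D) :
    (β * (μ (M ∩ E)).toReal + (μ (Mᶜ ∩ Eᶜ)).toReal) / β
        + ((μ (M ∩ D)).toReal + β * (μ (Mᶜ ∩ Dᶜ)).toReal) / β
      ≤ (1 - r) + r / β + (1 + 1/β) * (r * (1 - r)) :=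
  gbm_bound_Ce_Cd_general μ β r hβ M E D hM hE hD hPE hPD hind
end
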